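/- arXiv:2007.13864 — 2 statements merged into one kernel-verified Lean document; each statement's English description precedes it below -/
import Mathlib

section
/- Fix m ≥ 1 and a threshold function h. Let χ and χ_1, χ_2, χ_3, … be child distributions, each with finite m-th moment, such that Σ_{ℓ=1}^{∞} ℓ^m · |χ_j(ℓ) − χ(ℓ)| → 0 as j → ∞. Let Ψ and Ψ_j be the automaton distribution maps of (χ,h) and (χ_j,h). Then Ψ_j^{(m)}(0) → Ψ^{(m)}(0) as j → ∞; that is, the map χ ↦ Ψ^{(m)}(0) is sequentially continuous with respect to the metric d_m(χ_1,χ_2) = Σ_{k=1}^∞ k^m·|χ_1(k)−χ_2(k)|. -/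
/-- `B≥_{n,k}(x) = Σ_{j=k}^{n} C(n,j)·x^j·(1−x)^{n−j}`. -/
noncomputable def Bge (n k : ℕ) (x : ℝ) : ℝ :=
  ∑ j ∈ Finset.Icc k n, (n.choose j : ℝ) * x ^ j * (1 - x) ^ (n - j)

/-- A child distribution: nonnegative, summable, total mass one. -/
def IsChildDist (χ : ℕ → ℝ) : Prop :=
  (∀ n, 0 ≤ χ n) ∧ Summable χ ∧ (∑' n, χ n) = 1

/-- The automaton distribution map of a recursive tree system `(χ, h)`. -/
noncomputable def Psi (χ : ℕ → ℝ) (h : ℕ → ℕ) (x : ℝ) : ℝ :=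
  ∑' n, χ n * Bge n (h n) x

open Filter Topology Polynomial Finset

/-!
Each `Bge n k` is a polynomial in Bernstein form with coefficients in `{0, 1}`. Differentiating a
Bernstein form of degree `n` multiplies it by `n` and replaces the coefficients by their forward
differences, and a Bernstein form is bounded on `[0, 1]` by its largest coefficient; so the `i`-th
derivative of `Bge n k` is bounded by `(2n)^i` on `[0, 1]`. With a finite `m`-th moment this
dominates the series defining `Ψ`, which can therefore be differentiated `m` times termwise on
`[0, 1]`: `Ψ^{(m)}(0) = Σ χ(n) c_n` with `|c_n| ≤ 2^m n^m`, whence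
`|Ψ_j^{(m)}(0) - Ψ^{(m)}(0)| ≤ 2^m d_m(χ_j, χ)`.
-/

/-- By the mean value theorem the difference quotients of the terms are dominated by `u`, so
Tannery's theorem applies to them. -/
theorem hasDerivWithinAt_tsum_of_convex {ι F : Type*} [NormedAddCommGroup F] [NormedSpace ℝ F]
    [CompleteSpace F] {s : Set ℝ} (hs : Convex ℝ s) {f f' : ι → ℝ → F} {u : ι → ℝ}
    (hu : Summable u) (hf : ∀ n, ∀ y ∈ s, HasDerivWithinAt (f n) (f' n y) s y)
    (hf' : ∀ n, ∀ y ∈ s, ‖f' n y‖ ≤ u n) (hsum : ∀ y ∈ s, Summable fun n => f n y)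
    {x : ℝ} (hx : x ∈ s) :
    HasDerivWithinAt (fun y => ∑' n, f n y) (∑' n, f' n x) s x := by
  rw [hasDerivWithinAt_iff_tendsto_slope]
  have slope_tsum : ∀ y ∈ s, slope (fun y => ∑' n, f n y) x y = ∑' n, slope (f n) x y := by
    intro y hy
    simp only [slope_def_module]
    rw [← (hsum y hy).tsum_sub (hsum x hx), tsum_const_smul'']
  have slope_le : ∀ n, ∀ y ∈ s, ‖slope (f n) x y‖ ≤ u n := by
    intro n y hy
    rcases eq_or_ne y x with rfl | hyx
    · simpa using (norm_nonneg _).trans (hf' n y hy)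
    have hlip := hs.norm_image_sub_le_of_norm_hasDerivWithin_le (hf n) (hf' n) hx hy
    rw [slope_def_module, norm_smul, norm_inv, ← div_eq_inv_mul,
      div_le_iff₀ (norm_pos_iff.mpr (sub_ne_zero.mpr hyx))]
    exact hlip
  refine (tendsto_tsum_of_dominated_convergence hu
    (fun n => hasDerivWithinAt_iff_tendsto_slope.mp (hf n x hx)) ?_).congr' ?_
  · filter_upwards [self_mem_nhdsWithin] with y hy n using slope_le n y hy.1
  · filter_upwards [self_mem_nhdsWithin] with y hy using (slope_tsum y hy.1).symm

noncomputable def bernsteinForm {R : Type*} [CommRing R] (n : ℕ) (a : ℕ → R) : R[X] :=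
  ∑ ν ∈ range (n + 1), C (a ν) * bernsteinPolynomial R n ν

section Derivative

variable {R : Type*} [CommRing R]

theorem derivative_bernsteinForm (n : ℕ) (a : ℕ → R) :
    derivative (bernsteinForm n a) = n * bernsteinForm (n - 1) (fwdDiff 1 a) := by
  cases n with
  | zero => simp [bernsteinForm, bernsteinPolynomial]
  | succ n =>
    have shift : ∑ ν ∈ range (n + 1), C (a ν) * bernsteinPolynomial R n ν =
        ∑ ν ∈ range (n + 1), C (a (ν + 1)) * bernsteinPolynomial R n (ν + 1) +
          C (a 0) * bernsteinPolynomial R n 0 := by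
      rw [sum_range_succ', sum_range_succ _ n,
        bernsteinPolynomial.eq_zero_of_lt R (Nat.lt_succ_self n), mul_zero, add_zero]
    simp only [bernsteinForm, derivative_sum, derivative_C_mul]
    rw [sum_range_succ' _ (n + 1)]
    simp only [bernsteinPolynomial.derivative_succ, bernsteinPolynomial.derivative_zero,
      Nat.add_sub_cancel, fwdDiff, map_sub, sub_mul, sum_sub_distrib, shift]
    simp only [mul_sub, sum_sub_distrib, mul_left_comm _ ((↑(n + 1) : R[X])), ← mul_sum]
    ring

theorem iterate_derivative_bernsteinForm (i n : ℕ) (a : ℕ → R) :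
    derivative^[i] (bernsteinForm n a) =
      n.descFactorial i * bernsteinForm (n - i) ((fwdDiff 1)^[i] a) := by
  induction i with
  | zero => simp
  | succ i ih =>
    rw [Function.iterate_succ_apply', ih, derivative_natCast_mul, derivative_bernsteinForm,
      ← Function.iterate_succ_apply' (fwdDiff 1), Nat.descFactorial_succ, Nat.sub_sub]
    push_cast
    ring

end Derivative

theorem norm_fwdDiff_iterate_le {M G : Type*} [AddCommMonoid M] [SeminormedAddCommGroup G]
    (h : M) {f : M → G} {C : ℝ} (hf : ∀ y, ‖f y‖ ≤ C) (i : ℕ) (y : M) :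
    ‖((fwdDiff h)^[i] f) y‖ ≤ 2 ^ i * C := by
  induction i generalizing y with
  | zero => simpa using hf y
  | succ i ih =>
    rw [Function.iterate_succ_apply', fwdDiff]
    calc _ ≤ ‖((fwdDiff h)^[i] f) (y + h)‖ + ‖((fwdDiff h)^[i] f) y‖ := norm_sub_le _ _
      _ ≤ 2 ^ (i + 1) * C := by rw [pow_succ]; linarith [ih (y + h), ih y]

theorem eval_bernsteinPolynomial_nonneg {n ν : ℕ} {x : ℝ} (hx : x ∈ Set.Icc (0 : ℝ) 1) :
    0 ≤ (bernsteinPolynomial ℝ n ν).eval x := by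
  obtain ⟨hx0, hx1⟩ := hx
  have : 0 ≤ 1 - x := sub_nonneg.mpr hx1
  simp only [bernsteinPolynomial, eval_mul, eval_natCast, eval_pow, eval_X, eval_sub, eval_one]
  positivity

theorem abs_eval_bernsteinForm_le {n : ℕ} {a : ℕ → ℝ} {C : ℝ} (ha : ∀ ν, |a ν| ≤ C) {x : ℝ}
    (hx : x ∈ Set.Icc (0 : ℝ) 1) : |(bernsteinForm n a).eval x| ≤ C := by
  have partition : ∑ ν ∈ range (n + 1), (bernsteinPolynomial ℝ n ν).eval x = 1 := by
    rw [← eval_finsetSum, bernsteinPolynomial.sum, eval_one]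
  simp only [bernsteinForm, eval_finsetSum, eval_mul, eval_C]
  calc _ ≤ ∑ ν ∈ range (n + 1), |a ν * (bernsteinPolynomial ℝ n ν).eval x| := abs_sum_le_sum_abs _ _
    _ ≤ ∑ ν ∈ range (n + 1), C * (bernsteinPolynomial ℝ n ν).eval x := by
      gcongr with ν
      rw [abs_mul, abs_of_nonneg (eval_bernsteinPolynomial_nonneg hx)]
      exact mul_le_mul_of_nonneg_right (ha ν) (eval_bernsteinPolynomial_nonneg hx)
    _ = C := by rw [← mul_sum, partition, mul_one]

theorem abs_eval_iterate_derivative_bernsteinForm_le {n : ℕ} {a : ℕ → ℝ} {C : ℝ}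
    (ha : ∀ ν, |a ν| ≤ C) (i : ℕ) {x : ℝ} (hx : x ∈ Set.Icc (0 : ℝ) 1) :
    |(derivative^[i] (bernsteinForm n a)).eval x| ≤ (2 * n) ^ i * C := by
  rw [iterate_derivative_bernsteinForm, eval_mul, eval_natCast, abs_mul, Nat.abs_cast]
  calc _ ≤ (n : ℝ) ^ i * (2 ^ i * C) := by
        gcongr
        · exact_mod_cast Nat.descFactorial_le_pow n i
        · refine abs_eval_bernsteinForm_le (fun ν => ?_) hx
          simpa only [Real.norm_eq_abs] using norm_fwdDiff_iterate_le 1 (f := a) ha i ν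
    _ = (2 * n) ^ i * C := by ring

noncomputable def bgePoly (n k : ℕ) : ℝ[X] :=
  bernsteinForm n ((Set.Ici k).indicator 1)

theorem Bge_eq_eval_bgePoly (n k : ℕ) (x : ℝ) : Bge n k x = (bgePoly n k).eval x := by
  have hIcc : (range (n + 1)).filter (k ≤ ·) = Icc k n := by
    ext ν; simp only [mem_filter, mem_range, mem_Icc]; omega
  simp only [Bge, bgePoly, bernsteinForm, eval_finsetSum, eval_mul, eval_C, Set.indicator_apply,
    Set.mem_Ici, Pi.one_apply, ite_mul, one_mul, zero_mul, ← sum_filter, hIcc]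
  simp [bernsteinPolynomial]

theorem abs_eval_iterate_derivative_bgePoly_le (i n k : ℕ) {x : ℝ}
    (hx : x ∈ Set.Icc (0 : ℝ) 1) : |(derivative^[i] (bgePoly n k)).eval x| ≤ (2 * n) ^ i := by
  have hcoeff : ∀ ν, |(Set.Ici k).indicator (1 : ℕ → ℝ) ν| ≤ 1 := fun ν => by
    by_cases hν : ν ∈ Set.Ici k <;> simp [hν]
  simpa [bgePoly] using abs_eval_iterate_derivative_bernsteinForm_le (n := n) hcoeff i hx

theorem summable_mul_pow_of_le {χ : ℕ → ℝ} (hχ0 : ∀ n, 0 ≤ χ n) (hχ : Summable χ) {m i : ℕ}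
    (hmom : Summable fun n => χ n * (n : ℝ) ^ m) (hi : i ≤ m) :
    Summable fun n => χ n * (n : ℝ) ^ i := by
  refine (hχ.add hmom).of_nonneg_of_le (fun n => by have := hχ0 n; positivity) fun n => ?_
  have hpow : (n : ℝ) ^ i ≤ 1 + (n : ℝ) ^ m := by
    rcases Nat.eq_zero_or_pos n with rfl | hn
    · simp only [Nat.cast_zero]
      linarith [pow_le_one₀ (n := i) (le_refl (0 : ℝ)) zero_le_one, pow_nonneg (le_refl (0 : ℝ)) m]
    · have hn1 : (1 : ℝ) ≤ n := by exact_mod_cast hn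
      linarith [pow_le_pow_right₀ hn1 hi]
  nlinarith [hχ0 n]

theorem iteratedDerivWithin_tsum_of_convex {ι F : Type*} [NormedAddCommGroup F]
    [NormedSpace ℝ F] [CompleteSpace F] {s : Set ℝ} (hs : Convex ℝ s) (hs' : UniqueDiffOn ℝ s)
    {m : ℕ} {f : ℕ → ι → ℝ → F} {u : ℕ → ι → ℝ}
    (hf : ∀ i < m, ∀ n, ∀ y ∈ s, HasDerivWithinAt (f i n) (f (i + 1) n y) s y)
    (hu : ∀ i ≤ m, Summable (u i)) (hfu : ∀ i ≤ m, ∀ n, ∀ y ∈ s, ‖f i n y‖ ≤ u i n)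
    {i : ℕ} (hi : i ≤ m) {x : ℝ} (hx : x ∈ s) :
    iteratedDerivWithin i (fun y => ∑' n, f 0 n y) s x = ∑' n, f i n x := by
  induction i generalizing x with
  | zero => simp
  | succ i ih =>
    have hsum : ∀ y ∈ s, Summable fun n => f i n y := fun y hy =>
      (hu i (by omega)).of_norm_bounded fun n => hfu i (by omega) n y hy
    rw [iteratedDerivWithin_succ,
      derivWithin_congr (fun y hy => ih (by omega) hy) (ih (by omega) hx)]
    exact (hasDerivWithinAt_tsum_of_convex hs (hu (i + 1) hi) (hf i hi) (hfu (i + 1) hi) hsum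
      hx).derivWithin (hs' x hx)

theorem iteratedDerivWithin_Psi {χ : ℕ → ℝ} (hχ0 : ∀ n, 0 ≤ χ n) (hχ : Summable χ) {m : ℕ}
    (hmom : Summable fun n => χ n * (n : ℝ) ^ m) (h : ℕ → ℕ) {i : ℕ} (hi : i ≤ m) {x : ℝ}
    (hx : x ∈ Set.Icc (0 : ℝ) 1) :
    iteratedDerivWithin i (Psi χ h) (Set.Icc 0 1) x =
      ∑' n, χ n * (derivative^[i] (bgePoly n (h n))).eval x := by
  have hPsi : Psi χ h = fun y => ∑' n, χ n * (derivative^[0] (bgePoly n (h n))).eval y := by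
    ext y
    simp only [Psi, Bge_eq_eval_bgePoly, Function.iterate_zero, id]
  rw [hPsi]
  refine iteratedDerivWithin_tsum_of_convex (convex_Icc 0 1) uniqueDiffOn_Icc_zero_one
    (f := fun i n y => χ n * (derivative^[i] (bgePoly n (h n))).eval y)
    (u := fun i n => 2 ^ i * (χ n * (n : ℝ) ^ i)) (fun i _ n y _ => ?_)
    (fun i hi => (summable_mul_pow_of_le hχ0 hχ hmom hi).mul_left _) (fun i _ n y hy => ?_) hi hx
  · rw [Function.iterate_succ_apply']
    exact ((Polynomial.hasDerivAt _ y).const_mul (χ n)).hasDerivWithinAt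
  · rw [Real.norm_eq_abs, abs_mul, abs_of_nonneg (hχ0 n)]
    calc _ ≤ χ n * (2 * n) ^ i :=
          mul_le_mul_of_nonneg_left (abs_eval_iterate_derivative_bgePoly_le i n (h n) hy) (hχ0 n)
      _ = 2 ^ i * (χ n * (n : ℝ) ^ i) := by ring

theorem abs_tsum_mul_sub_tsum_mul_le {m : ℕ} (hm : m ≠ 0) {ψ χ c : ℕ → ℝ} {C : ℝ}
    (hψ0 : ∀ n, 0 ≤ ψ n) (hχ0 : ∀ n, 0 ≤ χ n) (hψ : Summable fun n => ψ n * (n : ℝ) ^ m)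
    (hχ : Summable fun n => χ n * (n : ℝ) ^ m) (hc : ∀ n, |c n| ≤ C * (n : ℝ) ^ m) :
    |∑' n, ψ n * c n - ∑' n, χ n * c n| ≤
      C * ∑' k : ℕ, ((k : ℝ) + 1) ^ m * |ψ (k + 1) - χ (k + 1)| := by
  have summable_mul_c : ∀ φ : ℕ → ℝ, (∀ n, 0 ≤ φ n) → (Summable fun n => φ n * (n : ℝ) ^ m) →
      Summable fun n => φ n * c n := fun φ hφ0 hφ =>
    (hφ.mul_left C).of_norm_bounded fun n => by
      rw [Real.norm_eq_abs, abs_mul, abs_of_nonneg (hφ0 n)]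
      nlinarith [hc n, hφ0 n]
  have hdiff : Summable fun n : ℕ => (n : ℝ) ^ m * |ψ n - χ n| :=
    (hψ.add hχ).of_nonneg_of_le (fun n => by positivity) fun n => by
      have : |ψ n - χ n| ≤ ψ n + χ n := by
        rw [abs_le]; constructor <;> linarith [hψ0 n, hχ0 n]
      nlinarith [pow_nonneg (Nat.cast_nonneg (α := ℝ) n) m]
  rw [← (summable_mul_c ψ hψ0 hψ).tsum_sub (summable_mul_c χ hχ0 hχ), ← Real.norm_eq_abs]
  calc _ ≤ ∑' n : ℕ, C * ((n : ℝ) ^ m * |ψ n - χ n|) :=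
        tsum_of_norm_bounded (hdiff.mul_left C).hasSum fun n => by
          rw [Real.norm_eq_abs, ← sub_mul, abs_mul]
          nlinarith [hc n, abs_nonneg (ψ n - χ n)]
    _ = C * ∑' k : ℕ, ((k : ℝ) + 1) ^ m * |ψ (k + 1) - χ (k + 1)| := by
        rw [tsum_mul_left, hdiff.tsum_eq_zero_add]
        simp [hm]

theorem stmt7_general (m : ℕ) (hm : 1 ≤ m) (h : ℕ → ℕ)
    (χ : ℕ → ℝ) (χs : ℕ → ℕ → ℝ)
    (hχ : IsChildDist χ) (hχs : ∀ j, IsChildDist (χs j))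
    (hmom : Summable fun n => χ n * (n : ℝ) ^ m)
    (hmoms : ∀ j, Summable fun n => χs j n * (n : ℝ) ^ m)
    (hconv : Filter.Tendsto
      (fun j => ∑' k : ℕ, ((k : ℝ) + 1) ^ m * |χs j (k + 1) - χ (k + 1)|)
      Filter.atTop (nhds 0)) :
    Filter.Tendsto
      (fun j => iteratedDerivWithin m (Psi (χs j) h) (Set.Icc (0 : ℝ) 1) 0)
      Filter.atTop
      (nhds (iteratedDerivWithin m (Psi χ h) (Set.Icc (0 : ℝ) 1) 0)) := by
  have h0 : (0 : ℝ) ∈ Set.Icc (0 : ℝ) 1 := ⟨le_rfl, zero_le_one⟩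
  set c : ℕ → ℝ := fun n => (derivative^[m] (bgePoly n (h n))).eval 0
  have hc : ∀ n, |c n| ≤ 2 ^ m * (n : ℝ) ^ m := fun n =>
    mul_pow (2 : ℝ) n m ▸ abs_eval_iterate_derivative_bgePoly_le m n (h n) h0
  rw [tendsto_iff_dist_tendsto_zero]
  refine squeeze_zero (fun j => dist_nonneg) (fun j => ?_) (by simpa using hconv.const_mul (2 ^ m))
  rw [Real.dist_eq, iteratedDerivWithin_Psi (hχs j).1 (hχs j).2.1 (hmoms j) h le_rfl h0,
    iteratedDerivWithin_Psi hχ.1 hχ.2.1 hmom h le_rfl h0]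
  exact abs_tsum_mul_sub_tsum_mul_le (by omega) (hχs j).1 hχ.1 (hmoms j) hmom hc

theorem stmt7 (m : ℕ) (hm : 1 ≤ m) (h : ℕ → ℕ) (hh : ∀ n, 1 ≤ h n)
    (χ : ℕ → ℝ) (χs : ℕ → ℕ → ℝ)
    (hχ : IsChildDist χ) (hχs : ∀ j, IsChildDist (χs j))
    (hmom : Summable fun n => χ n * (n : ℝ) ^ m)
    (hmoms : ∀ j, Summable fun n => χs j n * (n : ℝ) ^ m)
    (hconv : Filter.Tendsto
      (fun j => ∑' k : ℕ, ((k : ℝ) + 1) ^ m * |χs j (k + 1) - χ (k + 1)|)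
      Filter.atTop (nhds 0)) :
    Filter.Tendsto
      (fun j => iteratedDerivWithin m (Psi (χs j) h) (Set.Icc (0 : ℝ) 1) 0)
      Filter.atTop
      (nhds (iteratedDerivWithin m (Psi χ h) (Set.Icc (0 : ℝ) 1) 0)) :=
  stmt7_general m hm h χ χs hχ hχs hmom hmoms hconv
end

section
/- Let 2 ≤ ℓ_1 < ℓ_2 < ⋯ < ℓ_m be integers, let h be a threshold function with h(ℓ_k) = k for each k, and let χ = crit(ℓ_1,…,ℓ_m) be the unique child distribution supported within {0, ℓ_1, …, ℓ_m} for which (χ,h) is m-concordant, with automaton distribution map Ψ. Then (χ,h) is (m+1)-subcordant, i.e., Ψ^{(m+1)}(0) < 0. -/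
/-- `Ψ` is `m`-concordant: the first `m` derivatives of `Ψ` at `0` (within `[0,1]`)
match those of the identity, i.e. `Ψ'(0) = 1` and `Ψ^{(k)}(0) = 0` for `2 ≤ k ≤ m`.
(For `m = 0` the condition is vacuous.) -/
def Concordant (m : ℕ) (Ψ : ℝ → ℝ) : Prop :=
  (1 ≤ m → iteratedDerivWithin 1 Ψ (Set.Icc (0 : ℝ) 1) 0 = 1) ∧
  ∀ k, 2 ≤ k → k ≤ m → iteratedDerivWithin k Ψ (Set.Icc (0 : ℝ) 1) 0 = 0

/-!
Ψ is a polynomial, and since `h(ℓ_k) = k` its derivative is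
`Ψ'(x) = ∑_{k<m} d_k x^k (1 - x)^{e_k}` with `e_k = ℓ_{k+1} - 1 - k` nondecreasing and `e_0 ≥ 1`;
`m`-concordance says `1 - Ψ' ≡ 0 mod x^m`. Write `S_j` for the sum of the first `j` terms.
Then `(1 - S_j) (1 - x)^{-e_j}` vanishes below degree `j` and has positive coefficients from
degree `j` on: subtracting the next term removes exactly its coefficient at `x^j` (concordance
forces `d_j` to be that coefficient), and multiplying by `(1 - x)^{-(e_{j+1} - e_j)}`, a series
with nonnegative coefficients and constant term `1`, preserves the property. For `j = m` this makes
the coefficient of `x^m` in `1 - Ψ'` positive, i.e. `Ψ^{(m+1)}(0) < 0`.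
-/

open Finset Polynomial
open scoped Nat PowerSeries

namespace PowerSeries

section CommRing

variable {R : Type*} [CommRing R]

theorem one_sub_pow_mul_invOneSubPow (e : ℕ) : (1 - X) ^ e * (invOneSubPow R e).val = 1 := by
  rw [← invOneSubPow_inv_eq_one_sub_pow]
  exact (invOneSubPow R e).inv_val

theorem constantCoeff_invOneSubPow (e : ℕ) : constantCoeff (invOneSubPow R e).val = 1 := by
  simpa using congrArg constantCoeff (one_sub_pow_mul_invOneSubPow (R := R) e)

theorem coeff_mul_of_X_pow_dvd {j : ℕ} {f : R⟦X⟧} (hf : X ^ j ∣ f) (g : R⟦X⟧) :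
    coeff j (f * g) = coeff j f * constantCoeff g := by
  obtain ⟨f, rfl⟩ := hf
  rw [mul_assoc, coeff_X_pow_mul', coeff_X_pow_mul', if_pos le_rfl, if_pos le_rfl, Nat.sub_self,
    coeff_zero_eq_constantCoeff_apply, coeff_zero_eq_constantCoeff_apply, map_mul]

variable (d : ℕ → R) (e : ℕ → ℕ)

noncomputable def bernsteinTypeSum (j : ℕ) : R⟦X⟧ :=
  ∑ k ∈ range j, C (d k) * X ^ k * (1 - X) ^ e k

variable {d e} {m : ℕ}

theorem X_pow_dvd_one_sub_bernsteinTypeSum (hS : X ^ m ∣ 1 - bernsteinTypeSum d e m) {j : ℕ}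
    (hj : j ≤ m) : X ^ j ∣ 1 - bernsteinTypeSum d e j := by
  have hsplit : 1 - bernsteinTypeSum d e j
      = (1 - bernsteinTypeSum d e m) + ∑ k ∈ Ico j m, C (d k) * X ^ k * (1 - X) ^ e k := by
    rw [bernsteinTypeSum, bernsteinTypeSum, ← sum_range_add_sum_Ico _ hj]
    ring
  rw [hsplit]
  refine dvd_add ((pow_dvd_pow X hj).trans hS) (dvd_sum fun k hk => ?_)
  exact ((pow_dvd_pow X (mem_Ico.mp hk).1).mul_left _).mul_right _

theorem one_sub_bernsteinTypeSum_succ_mul_invOneSubPow (j : ℕ) :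
    (1 - bernsteinTypeSum d e (j + 1)) * (invOneSubPow R (e j)).val
      = (1 - bernsteinTypeSum d e j) * (invOneSubPow R (e j)).val - C (d j) * X ^ j := by
  rw [bernsteinTypeSum, sum_range_succ, ← bernsteinTypeSum]
  linear_combination (-C (d j) * X ^ j) * one_sub_pow_mul_invOneSubPow (R := R) (e j)

end CommRing

section Order

variable {R : Type*} [CommRing R] [LinearOrder R]

def PositiveFrom (j : ℕ) (f : R⟦X⟧) : Prop :=
  X ^ j ∣ f ∧ ∀ s, j ≤ s → 0 < coeff s f

theorem PositiveFrom.one_sub_bernsteinTypeSum_succ {d : ℕ → R} {e : ℕ → ℕ} {m j : ℕ}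
    (hS : X ^ m ∣ 1 - bernsteinTypeSum d e m) (hj : j < m)
    (hP : PositiveFrom j ((1 - bernsteinTypeSum d e j) * (invOneSubPow R (e j)).val)) :
    PositiveFrom (j + 1) ((1 - bernsteinTypeSum d e (j + 1)) * (invOneSubPow R (e j)).val) := by
  refine ⟨dvd_mul_of_dvd_left (X_pow_dvd_one_sub_bernsteinTypeSum hS hj) _, fun s hs => ?_⟩
  rw [one_sub_bernsteinTypeSum_succ_mul_invOneSubPow, map_sub, coeff_C_mul_X_pow,
    if_neg (by omega), sub_zero]
  exact hP.2 s (by omega)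

variable [IsStrictOrderedRing R]

theorem coeff_invOneSubPow_nonneg (e n : ℕ) : 0 ≤ coeff n (invOneSubPow R e).val := by
  rcases e with _ | e
  · simp only [invOneSubPow_zero, Units.val_one, coeff_one]
    split_ifs <;> norm_num
  · rw [invOneSubPow_val_succ_eq_mk_add_choose, coeff_mk]
    positivity

theorem positiveFrom_zero_invOneSubPow {e : ℕ} (he : e ≠ 0) :
    PositiveFrom 0 (invOneSubPow R e).val := by
  obtain ⟨e, rfl⟩ := Nat.exists_eq_succ_of_ne_zero he
  refine ⟨by simp, fun s _ => ?_⟩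
  rw [invOneSubPow_val_succ_eq_mk_add_choose, coeff_mk]
  exact_mod_cast Nat.choose_pos (Nat.le_add_right e s)

theorem PositiveFrom.mul {j : ℕ} {f g : R⟦X⟧} (hf : PositiveFrom j f)
    (hg : ∀ n, 0 ≤ coeff n g) (hg₀ : 0 < constantCoeff g) : PositiveFrom j (f * g) := by
  refine ⟨dvd_mul_of_dvd_left hf.1 g, fun s hs => ?_⟩
  have hlow := X_pow_dvd_iff.mp hf.1
  rw [coeff_mul]
  refine sum_pos' (fun ⟨a, b⟩ _ => ?_) ⟨(s, 0), by simp, ?_⟩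
  · rcases lt_or_ge a j with ha | ha
    · simp [hlow a ha]
    · exact mul_nonneg (hf.2 a ha).le (hg b)
  · rw [coeff_zero_eq_constantCoeff_apply]
    exact mul_pos (hf.2 s hs) hg₀

variable {d : ℕ → R} {e : ℕ → ℕ} {m : ℕ}

theorem positiveFrom_one_sub_bernsteinTypeSum (he₀ : e 0 ≠ 0)
    (he : ∀ k, k + 1 < m → e k ≤ e (k + 1)) (hS : X ^ m ∣ 1 - bernsteinTypeSum d e m) :
    ∀ j < m, PositiveFrom j ((1 - bernsteinTypeSum d e j) * (invOneSubPow R (e j)).val) := by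
  intro j
  induction j with
  | zero =>
    intro _
    simpa [bernsteinTypeSum] using positiveFrom_zero_invOneSubPow (R := R) he₀
  | succ j ih =>
    intro hj
    obtain ⟨b, hb⟩ := Nat.exists_eq_add_of_le (he j hj)
    have hP := PositiveFrom.one_sub_bernsteinTypeSum_succ hS (by omega) (ih (by omega))
    rw [hb, invOneSubPow_add, Units.val_mul, ← mul_assoc]
    exact hP.mul (coeff_invOneSubPow_nonneg b) (by rw [constantCoeff_invOneSubPow]; exact one_pos)

theorem coeff_bernsteinTypeSum_neg (hm : m ≠ 0) (he₀ : e 0 ≠ 0)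
    (he : ∀ k, k + 1 < m → e k ≤ e (k + 1)) (hS : X ^ m ∣ 1 - bernsteinTypeSum d e m) :
    coeff m (bernsteinTypeSum d e m) < 0 := by
  obtain ⟨n, rfl⟩ := Nat.exists_eq_succ_of_ne_zero hm
  have hpos := (PositiveFrom.one_sub_bernsteinTypeSum_succ hS n.lt_succ_self
    (positiveFrom_one_sub_bernsteinTypeSum he₀ he hS n n.lt_succ_self)).2 (n + 1) le_rfl
  rw [coeff_mul_of_X_pow_dvd hS, constantCoeff_invOneSubPow, mul_one, map_sub, coeff_one,
    if_neg n.succ_ne_zero] at hpos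
  linarith

end Order

end PowerSeries

noncomputable def bernsteinTail (R : Type*) [CommRing R] (n k : ℕ) : R[X] :=
  ∑ j ∈ Icc k n, bernsteinPolynomial R n j

theorem derivative_bernsteinTail_succ (R : Type*) [CommRing R] (n k : ℕ) :
    derivative (bernsteinTail R n (k + 1)) = n * bernsteinPolynomial R (n - 1) k := by
  rcases n.eq_zero_or_pos with rfl | hn
  · simp [bernsteinTail]
  have hshift : bernsteinTail R n (k + 1) = ∑ j ∈ Ico k n, bernsteinPolynomial R n (j + 1) := by
    rw [bernsteinTail, sum_Ico_add', ← Finset.Ico_add_one_right_eq_Icc]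
  rw [hshift, derivative_sum]
  simp only [bernsteinPolynomial.derivative_succ, ← mul_sum]
  rcases le_or_gt k n with hkn | hnk
  · have htel := sum_Ico_sub (bernsteinPolynomial R (n - 1)) hkn
    rw [bernsteinPolynomial.eq_zero_of_lt R (by omega : n - 1 < n)] at htel
    rw [sum_sub_distrib] at htel ⊢
    linear_combination (-(n : R[X])) * htel
  · rw [Ico_eq_empty_of_le hnk.le, sum_empty, bernsteinPolynomial.eq_zero_of_lt R (by omega)]

theorem coe_derivative_sum_bernsteinTail {R : Type*} [CommRing R] (c : ℕ → R) (n : ℕ → ℕ)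
    (m : ℕ) :
    ((derivative (∑ k ∈ range m, C (c k) * bernsteinTail R (n k) (k + 1)) : R[X]) : R⟦X⟧)
      = PowerSeries.bernsteinTypeSum (fun k => c k * n k * (n k - 1).choose k)
          (fun k => n k - 1 - k) m := by
  rw [PowerSeries.bernsteinTypeSum, derivative_sum, ← coeToPowerSeries.ringHom_apply, map_sum]
  refine sum_congr rfl fun k _ => ?_
  rw [derivative_C_mul, derivative_bernsteinTail_succ, bernsteinPolynomial]
  simp only [map_mul, map_pow, map_sub, map_one, map_natCast, coeToPowerSeries.ringHom_apply,
    coe_C, coe_X, Nat.sub_sub]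
  ring

theorem Bge_eq_eval_bernsteinTail (n k : ℕ) (x : ℝ) :
    Bge n k x = (bernsteinTail ℝ n k).eval x := by
  simp [Bge, bernsteinTail, eval_finsetSum, bernsteinPolynomial]

theorem Psi_eq_sum_range {m : ℕ} {ℓ h : ℕ → ℕ} {χ : ℕ → ℝ} (hh₀ : 1 ≤ h 0)
    (hinc : ∀ k, 1 ≤ k → k < m → ℓ k < ℓ (k + 1))
    (hhℓ : ∀ k, 1 ≤ k → k ≤ m → h (ℓ k) = k)
    (hsupp : ∀ n, χ n ≠ 0 → n = 0 ∨ ∃ k, 1 ≤ k ∧ k ≤ m ∧ ℓ k = n) (x : ℝ) :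
    Psi χ h x = ∑ k ∈ range m, χ (ℓ (k + 1)) * Bge (ℓ (k + 1)) (k + 1) x := by
  have hmono : StrictMonoOn (fun k => ℓ (k + 1)) (Set.Iio m) :=
    strictMonoOn_of_lt_add_one Set.ordConnected_Iio fun a _ _ ha => hinc (a + 1) (by omega) ha
  rw [Psi, tsum_eq_sum (s := (range m).image fun k => ℓ (k + 1)), sum_image]
  · exact sum_congr rfl fun k hk => by rw [hhℓ (k + 1) (by omega) (by simpa using hk)]
  · simpa using hmono.injOn
  · intro n hn
    by_contra hne
    rcases hsupp n (left_ne_zero_of_mul hne) with rfl | ⟨k, hk₁, hkm, rfl⟩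
    · simp [Bge, Icc_eq_empty_of_lt (by omega : 0 < h 0)] at hne
    · exact hn (mem_image.mpr ⟨k - 1, mem_range.mpr (by omega), by rw [Nat.sub_add_cancel hk₁]⟩)

theorem iterate_deriv_eval {𝕜 : Type*} [NontriviallyNormedField 𝕜] (p : 𝕜[X]) (n : ℕ) :
    deriv^[n] (fun x => p.eval x) = fun x => (derivative^[n] p).eval x := by
  induction n generalizing p with
  | zero => rfl
  | succ n ih =>
    rw [Function.iterate_succ_apply, Function.iterate_succ_apply, ← ih]
    congr 1
    exact funext fun x => p.deriv

theorem iteratedDerivWithin_eval_Icc_zero (p : ℝ[X]) (n : ℕ) :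
    iteratedDerivWithin n (fun x => p.eval x) (Set.Icc 0 1) 0 = n ! * p.coeff n := by
  rw [iteratedDerivWithin_eq_iteratedDeriv (uniqueDiffOn_Icc zero_lt_one)
    (by simpa using (p.contDiff_aeval (𝕜 := ℝ) n).contDiffAt) (by simp),
    iteratedDeriv_eq_iterate, iterate_deriv_eval]
  beta_reduce
  rw [← coeff_zero_eq_eval_zero, coeff_iterate_derivative]
  simp [Nat.descFactorial_self]

theorem iteratedDerivWithin_succ_eval_Icc_zero (p : ℝ[X]) (n : ℕ) :
    iteratedDerivWithin (n + 1) (fun x => p.eval x) (Set.Icc 0 1) 0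
      = n ! * (derivative p).coeff n := by
  rw [iteratedDerivWithin_eval_Icc_zero, coeff_derivative, Nat.factorial_succ]
  push_cast
  ring

theorem X_pow_dvd_one_sub_derivative_of_concordant {p : ℝ[X]} {m : ℕ} (hm : 1 ≤ m)
    (hp : Concordant m fun x => p.eval x) : PowerSeries.X ^ m ∣ 1 - (derivative p : ℝ⟦X⟧) := by
  rw [PowerSeries.X_pow_dvd_iff]
  rintro (_ | s) hs
  · have h1 := hp.1 hm
    rw [iteratedDerivWithin_succ_eval_Icc_zero] at h1
    simp_all
  · have h0 := hp.2 (s + 2) (by omega) (by omega)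
    rw [iteratedDerivWithin_succ_eval_Icc_zero] at h0
    simp_all [Nat.factorial_ne_zero]

theorem stmt12_general (m : ℕ) (hm : 1 ≤ m) (ℓ : ℕ → ℕ) (h : ℕ → ℕ)
    (hℓ1 : 2 ≤ ℓ 1)
    (hinc : ∀ k, 1 ≤ k → k < m → ℓ k < ℓ (k + 1))
    (hh : ∀ n, 1 ≤ h n)
    (hhℓ : ∀ k, 1 ≤ k → k ≤ m → h (ℓ k) = k)
    (χ : ℕ → ℝ)
    (hsupp : ∀ n, χ n ≠ 0 → n = 0 ∨ ∃ k, 1 ≤ k ∧ k ≤ m ∧ ℓ k = n)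
    (hconc : Concordant m (Psi χ h)) :
    iteratedDerivWithin (m + 1) (Psi χ h) (Set.Icc (0 : ℝ) 1) 0 < 0 := by
  set p : ℝ[X] := ∑ k ∈ range m, C (χ (ℓ (k + 1))) * bernsteinTail ℝ (ℓ (k + 1)) (k + 1)
  have hΨ : Psi χ h = fun x => p.eval x := funext fun x => by
    simp [Psi_eq_sum_range (hh 0) hinc hhℓ hsupp, p, eval_finsetSum, Bge_eq_eval_bernsteinTail]
  have hS := X_pow_dvd_one_sub_derivative_of_concordant hm (hΨ ▸ hconc)
  rw [coe_derivative_sum_bernsteinTail] at hS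
  have hneg := PowerSeries.coeff_bernsteinTypeSum_neg (by omega) (by simp only [zero_add]; omega)
    (fun k hk => by have := hinc (k + 1) (by omega) hk; omega) hS
  rw [← coe_derivative_sum_bernsteinTail, coeff_coe] at hneg
  rw [hΨ, iteratedDerivWithin_succ_eval_Icc_zero]
  exact mul_neg_of_pos_of_neg (by positivity) hneg

theorem stmt12 (m : ℕ) (hm : 1 ≤ m) (ℓ : ℕ → ℕ) (h : ℕ → ℕ)
    (hℓ1 : 2 ≤ ℓ 1)
    (hinc : ∀ k, 1 ≤ k → k < m → ℓ k < ℓ (k + 1))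
    (hh : ∀ n, 1 ≤ h n)
    (hhℓ : ∀ k, 1 ≤ k → k ≤ m → h (ℓ k) = k)
    (χ : ℕ → ℝ) (hχ : IsChildDist χ)
    (hsupp : ∀ n, χ n ≠ 0 → n = 0 ∨ ∃ k, 1 ≤ k ∧ k ≤ m ∧ ℓ k = n)
    (hconc : Concordant m (Psi χ h)) :
    iteratedDerivWithin (m + 1) (Psi χ h) (Set.Icc (0 : ℝ) 1) 0 < 0 :=
  stmt12_general m hm ℓ h hℓ1 hinc hh hhℓ χ hsupp hconc
end
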